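/- arXiv:2409.08699 — 3 statements merged into one kernel-verified Lean document; each statement's English description precedes it below -/
import Mathlib

section
/- (Theorem 1, unified RIC bound) Let H = H₁ ⊗ H₂ with H₁ ∈ ℝ^{M₁×N₁}, H₂ ∈ ℝ^{M₂×N₂}, and let S ⊆ ℝ^{N₁N₂} be a set of vectors. For x ∈ S partitioned into N₁ blocks x_i of length N₂, let s₁(x) be the number of nonzero blocks and s₂(x) = max_i ‖x_i‖₀. Suppose H₁ satisfies RIP of order s₁(x) with constant δ_{s₁(x)}(H₁) and H₂ satisfies RIP of order s₂(x) with constant δ_{s₂(x)}(H₂) for every x ∈ S. Then for all x ∈ S, (1−δ)‖x‖₂² ≤ ‖Hx‖₂² ≤ (1+δ)‖x‖₂² holds with δ = sup_{x∈S} [(1+δ_{s₁(x)}(H₁))(1+δ_{s₂(x)}(H₂)) − 1]. -/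
open Matrix
open scoped Kronecker

/-- Squared Euclidean norm. -/
noncomputable def sqnorm {ι : Type*} [Fintype ι] (v : ι → ℝ) : ℝ := ∑ i, (v i) ^ 2

/-- Squared Frobenius norm. -/
noncomputable def frob {ι κ : Type*} [Fintype ι] [Fintype κ] (A : Matrix ι κ ℝ) : ℝ :=
  ∑ i, ∑ j, (A i j) ^ 2

/-- Number of nonzero entries (the ℓ₀ "norm"). -/
noncomputable def spars {ι : Type*} (v : ι → ℝ) : ℕ := Set.ncard {i | v i ≠ 0}

/-- `A` satisfies the RIP of order `s` with constant `δ`. -/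
def RIPwith {m n : Type*} [Fintype m] [Fintype n] (A : Matrix m n ℝ) (s : ℕ) (δ : ℝ) : Prop :=
  ∀ v : n → ℝ, spars v ≤ s →
    (1 - δ) * sqnorm v ≤ sqnorm (A.mulVec v) ∧ sqnorm (A.mulVec v) ≤ (1 + δ) * sqnorm v

/-- The RIP constant of order `s`: the smallest nonnegative `δ` satisfying the RIP. -/
noncomputable def RIC {m n : Type*} [Fintype m] [Fintype n] (A : Matrix m n ℝ) (s : ℕ) : ℝ :=
  sInf {δ : ℝ | 0 ≤ δ ∧ RIPwith A s δ}

/-- The `S`-RIP constant of `H` for a set `S` of vectors. -/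
noncomputable def SRIC {m n : Type*} [Fintype m] [Fintype n] (H : Matrix m n ℝ)
    (S : Set (n → ℝ)) : ℝ :=
  sInf {δ : ℝ | 0 ≤ δ ∧ ∀ x ∈ S,
    (1 - δ) * sqnorm x ≤ sqnorm (H.mulVec x) ∧ sqnorm (H.mulVec x) ≤ (1 + δ) * sqnorm x}

lemma sqnorm_nonneg' {ι : Type*} [Fintype ι] (v : ι → ℝ) : 0 ≤ sqnorm v :=
  Finset.sum_nonneg fun _ _ => sq_nonneg _

lemma sqnorm_pos' {ι : Type*} [Fintype ι] (v : ι → ℝ) (i : ι) (h : v i ≠ 0) :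
    0 < sqnorm v :=
  lt_of_lt_of_le (lt_of_le_of_ne (sq_nonneg _) (Ne.symm (pow_ne_zero 2 h)))
    (Finset.single_le_sum (fun j _ => sq_nonneg (v j)) (Finset.mem_univ i))

theorem unified_RIC_bound {M₁ N₁ M₂ N₂ : ℕ}
    (H₁ : Matrix (Fin M₁) (Fin N₁) ℝ) (H₂ : Matrix (Fin M₂) (Fin N₂) ℝ)
    (S : Set (Fin N₁ × Fin N₂ → ℝ))
    (d₁ d₂ : (Fin N₁ × Fin N₂ → ℝ) → ℝ)
    (hRIP : ∀ x ∈ S,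
      RIPwith H₁ (Set.ncard {i : Fin N₁ | (fun j => x (i, j)) ≠ 0}) (d₁ x) ∧
      RIPwith H₂ (Finset.univ.sup fun i : Fin N₁ => spars fun j : Fin N₂ => x (i, j)) (d₂ x))
    (hbdd : BddAbove ((fun x => (1 + d₁ x) * (1 + d₂ x) - 1) '' S)) :
    ∀ x ∈ S,
      (1 - sSup ((fun x => (1 + d₁ x) * (1 + d₂ x) - 1) '' S)) * sqnorm x
          ≤ sqnorm ((H₁ ⊗ₖ H₂).mulVec x) ∧
      sqnorm ((H₁ ⊗ₖ H₂).mulVec x)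
          ≤ (1 + sSup ((fun x => (1 + d₁ x) * (1 + d₂ x) - 1) '' S)) * sqnorm x := by
  intro x hx
  set Δ := sSup ((fun x => (1 + d₁ x) * (1 + d₂ x) - 1) '' S) with hΔdef
  by_cases hx0 : x = 0
  · subst hx0
    simp [sqnorm]
  · obtain ⟨p, hp⟩ := Function.ne_iff.mp hx0
    obtain ⟨i₀, j₀⟩ := p
    have hR1 := (hRIP x hx).1
    have hR2 := (hRIP x hx).2
    -- d₂ x ≥ 0
    have hblock : spars (fun j => x (i₀, j)) ≤
        Finset.univ.sup fun i : Fin N₁ => spars fun j : Fin N₂ => x (i, j) :=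
      Finset.le_sup (f := fun i => spars fun j : Fin N₂ => x (i, j)) (Finset.mem_univ i₀)
    have h2 := hR2 _ hblock
    have hposb : 0 < sqnorm (fun j => x (i₀, j)) := sqnorm_pos' _ j₀ hp
    have hd2 : 0 ≤ d₂ x := by nlinarith [h2.1, h2.2]
    -- d₁ x ≥ 0
    have hd1 : 0 ≤ d₁ x := by
      set e : Fin N₁ → ℝ := fun i => if i = i₀ then (1 : ℝ) else 0 with he
      have hse : spars e ≤ Set.ncard {i : Fin N₁ | (fun j => x (i, j)) ≠ 0} := by
        have h1 : {i | e i ≠ 0} = {i₀} := by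
          ext i; simp [he]
        have h2' : spars e = 1 := by rw [spars, h1, Set.ncard_singleton]
        rw [h2']
        have hi₀ : i₀ ∈ {i : Fin N₁ | (fun j => x (i, j)) ≠ 0} := by
          simp only [Set.mem_setOf_eq]
          intro h; exact hp (congrFun h j₀)
        exact (Set.ncard_pos (Set.toFinite _)).mpr ⟨i₀, hi₀⟩
      have h1e := hR1 e hse
      have hpose : 0 < sqnorm e := sqnorm_pos' e i₀ (by simp [he])
      nlinarith [h1e.1, h1e.2]
    -- main chain
    set y : Fin N₁ → Fin M₂ → ℝ := fun i => H₂.mulVec (fun j => x (i, j)) with hy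
    set T : ℝ := ∑ i, sqnorm (y i) with hT
    have hX : sqnorm x = ∑ i, sqnorm (fun j => x (i, j)) := by
      simp only [sqnorm]
      rw [Fintype.sum_prod_type]
    have hTup : T ≤ (1 + d₂ x) * sqnorm x := by
      rw [hX, hT, Finset.mul_sum]
      exact Finset.sum_le_sum fun i _ =>
        (hR2 _ (Finset.le_sup (f := fun i => spars fun j : Fin N₂ => x (i, j)) (Finset.mem_univ i))).2
    have hTlow : (1 - d₂ x) * sqnorm x ≤ T := by
      rw [hX, hT, Finset.mul_sum]
      exact Finset.sum_le_sum fun i _ =>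
        (hR2 _ (Finset.le_sup (f := fun i => spars fun j : Fin N₂ => x (i, j)) (Finset.mem_univ i))).1
    have hker : ∀ (a : Fin M₁) (b : Fin M₂),
        (H₁ ⊗ₖ H₂).mulVec x (a, b) = H₁.mulVec (fun i => y i b) a := by
      intro a b
      simp only [Matrix.mulVec, dotProduct, Matrix.kroneckerMap_apply, hy]
      rw [Fintype.sum_prod_type]
      simp [Finset.mul_sum, mul_assoc]
    have hU : sqnorm ((H₁ ⊗ₖ H₂).mulVec x)
        = ∑ b, sqnorm (H₁.mulVec (fun i => y i b)) := by
      simp only [sqnorm]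
      rw [Fintype.sum_prod_type, Finset.sum_comm]
      exact Finset.sum_congr rfl fun b _ => Finset.sum_congr rfl fun a _ => by rw [hker]
    have hcol : ∀ b : Fin M₂, spars (fun i => y i b) ≤
        Set.ncard {i : Fin N₁ | (fun j => x (i, j)) ≠ 0} := by
      intro b
      apply Set.ncard_le_ncard _ (Set.toFinite _)
      intro i hi
      simp only [Set.mem_setOf_eq] at hi ⊢
      intro h0
      apply hi
      have hz : ∀ j, x (i, j) = 0 := fun j => congrFun h0 j
      simp [hy, Matrix.mulVec, dotProduct, hz]
    have hcolsum : ∑ b, sqnorm (fun i => y i b) = T := by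
      simp only [sqnorm, hT]
      rw [Finset.sum_comm]
    have hUup : sqnorm ((H₁ ⊗ₖ H₂).mulVec x) ≤ (1 + d₁ x) * T := by
      rw [hU, ← hcolsum, Finset.mul_sum]
      exact Finset.sum_le_sum fun b _ => (hR1 _ (hcol b)).2
    have hUlow : (1 - d₁ x) * T ≤ sqnorm ((H₁ ⊗ₖ H₂).mulVec x) := by
      rw [hU, ← hcolsum, Finset.mul_sum]
      exact Finset.sum_le_sum fun b _ => (hR1 _ (hcol b)).1
    have hδ : (1 + d₁ x) * (1 + d₂ x) - 1 ≤ Δ := le_csSup hbdd ⟨x, hx, rfl⟩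
    have hXnn : 0 ≤ sqnorm x := sqnorm_nonneg' x
    constructor
    · rcases le_or_gt (d₁ x) 1 with h | h
      · nlinarith [mul_nonneg (by linarith : (0:ℝ) ≤ 1 - d₁ x)
          (sub_nonneg.mpr hTlow), mul_nonneg (mul_nonneg hd1 hd2) hXnn,
          mul_le_mul_of_nonneg_right hδ hXnn]
      · nlinarith [mul_nonneg (by linarith : (0:ℝ) ≤ d₁ x - 1)
          (sub_nonneg.mpr hTup), mul_nonneg hd2 hXnn,
          mul_le_mul_of_nonneg_right hδ hXnn]
    · nlinarith [mul_nonneg (by linarith : (0:ℝ) ≤ 1 + d₁ x)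
        (sub_nonneg.mpr hTup), mul_le_mul_of_nonneg_right hδ hXnn]
end

section
/- (Two-level RIP bound, fixed sparsity) Let H₁ ∈ ℝ^{M₁×N₁} satisfy RIP of order s₁ with constant δ₁ ∈ (0,1) and H₂ ∈ ℝ^{M₂×N₂} satisfy RIP of order s₂ with constant δ₂ ∈ (0,1). Then for any x ∈ ℝ^{N₁N₂} that, when partitioned into N₁ blocks of length N₂, has at most s₁ nonzero blocks each of which is s₂-sparse, we have (1−δ₁)(1−δ₂)‖x‖₂² ≤ ‖(H₁ ⊗ H₂)x‖₂² ≤ (1+δ₁)(1+δ₂)‖x‖₂². -/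
open Matrix
open scoped Kronecker

theorem two_level_rip_bound {M₁ N₁ M₂ N₂ : ℕ}
    (H₁ : Matrix (Fin M₁) (Fin N₁) ℝ) (H₂ : Matrix (Fin M₂) (Fin N₂) ℝ)
    (s₁ s₂ : ℕ) (δ₁ δ₂ : ℝ) (hδ₁ : δ₁ ∈ Set.Ioo (0:ℝ) 1) (hδ₂ : δ₂ ∈ Set.Ioo (0:ℝ) 1)
    (hRIP₁ : RIPwith H₁ s₁ δ₁) (hRIP₂ : RIPwith H₂ s₂ δ₂)
    (x : Fin N₁ × Fin N₂ → ℝ)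
    (hblocks : Set.ncard {i : Fin N₁ | (fun j => x (i, j)) ≠ 0} ≤ s₁)
    (hintra : ∀ i : Fin N₁, spars (fun j : Fin N₂ => x (i, j)) ≤ s₂) :
    (1 - δ₁) * (1 - δ₂) * sqnorm x ≤ sqnorm ((H₁ ⊗ₖ H₂).mulVec x) ∧
    sqnorm ((H₁ ⊗ₖ H₂).mulVec x) ≤ (1 + δ₁) * (1 + δ₂) * sqnorm x := by

  obtain ⟨hδ₁0, hδ₁1⟩ := hδ₁
  obtain ⟨hδ₂0, hδ₂1⟩ := hδ₂
  set Y : Fin M₂ → Fin N₁ → ℝ := fun q i => H₂.mulVec (fun j => x (i,j)) q with hY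
  have hsparsY : ∀ q, spars (Y q) ≤ s₁ := by
    intro q
    refine le_trans (Set.ncard_le_ncard ?_ (Set.toFinite _)) hblocks
    intro i hi
    simp only [Set.mem_setOf_eq] at hi ⊢
    intro h
    apply hi
    have hz : ∀ j, x (i,j) = 0 := fun j => congrFun h j
    simp [Y, Matrix.mulVec, dotProduct, hz]
  have key : ∀ p q, ((H₁ ⊗ₖ H₂).mulVec x) (p,q) = H₁.mulVec (Y q) p := by
    intro p q
    simp only [Matrix.mulVec, dotProduct, Y, Matrix.kroneckerMap_apply, Fintype.sum_prod_type,
      Finset.mul_sum]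
    exact Finset.sum_congr rfl fun i _ => Finset.sum_congr rfl fun j _ => by ring
  have hnorm : sqnorm ((H₁ ⊗ₖ H₂).mulVec x) = ∑ q, sqnorm (H₁.mulVec (Y q)) := by
    simp only [sqnorm]
    rw [Fintype.sum_prod_type, Finset.sum_comm]
    exact Finset.sum_congr rfl fun q _ => Finset.sum_congr rfl fun p _ => by rw [key]
  have hmid : ∑ q, sqnorm (Y q) = ∑ i, sqnorm (H₂.mulVec (fun j => x (i,j))) := by
    simp only [sqnorm, Y]
    exact Finset.sum_comm
  have hx : sqnorm x = ∑ i, sqnorm (fun j : Fin N₂ => x (i,j)) := by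
    simp only [sqnorm]; rw [Fintype.sum_prod_type]
  have h2lo : (1 - δ₂) * sqnorm x ≤ ∑ q, sqnorm (Y q) := by
    rw [hmid, hx, Finset.mul_sum]
    exact Finset.sum_le_sum fun i _ => (hRIP₂ _ (hintra i)).1
  have h2hi : ∑ q, sqnorm (Y q) ≤ (1 + δ₂) * sqnorm x := by
    rw [hmid, hx, Finset.mul_sum]
    exact Finset.sum_le_sum fun i _ => (hRIP₂ _ (hintra i)).2
  constructor
  · calc (1 - δ₁) * (1 - δ₂) * sqnorm x = (1 - δ₁) * ((1 - δ₂) * sqnorm x) := by ring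
    _ ≤ (1 - δ₁) * ∑ q, sqnorm (Y q) := by
        apply mul_le_mul_of_nonneg_left h2lo (by linarith)
    _ = ∑ q, (1 - δ₁) * sqnorm (Y q) := Finset.mul_sum _ _ _
    _ ≤ ∑ q, sqnorm (H₁.mulVec (Y q)) :=
        Finset.sum_le_sum fun q _ => (hRIP₁ _ (hsparsY q)).1
    _ = sqnorm ((H₁ ⊗ₖ H₂).mulVec x) := hnorm.symm
  · calc sqnorm ((H₁ ⊗ₖ H₂).mulVec x) = ∑ q, sqnorm (H₁.mulVec (Y q)) := hnorm
    _ ≤ ∑ q, (1 + δ₁) * sqnorm (Y q) :=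
        Finset.sum_le_sum fun q _ => (hRIP₁ _ (hsparsY q)).2
    _ = (1 + δ₁) * ∑ q, sqnorm (Y q) := (Finset.mul_sum _ _ _).symm
    _ ≤ (1 + δ₁) * ((1 + δ₂) * sqnorm x) := by
        apply mul_le_mul_of_nonneg_left h2hi (by linarith)
    _ = (1 + δ₁) * (1 + δ₂) * sqnorm x := by ring
end

section
/- (Corollary 3, Kronecker-supported sparsity RIC) Let H = H₁ ⊗ H₂, and let S be the set of (s₁,s₂)-Kronecker-supported sparse vectors in ℝ^{N₁N₂}: vectors of the form whose support is supp(u) × supp(v) for some s₁-sparse binary vector u ∈ {0,1}^{N₁} and s₂-sparse binary vector v ∈ {0,1}^{N₂} (equivalently, at most s₁ nonzero blocks sharing a common support of size at most s₂). Then δ_S(H) ≤ (1+δ_{s₁}(H₁))(1+δ_{s₂}(H₂)) − 1. -/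
open Matrix
open scoped Kronecker

lemma spars_le_of_subset {ι : Type*} [Fintype ι] (v : ι → ℝ) (T : Finset ι)
    (h : ∀ i, v i ≠ 0 → i ∈ T) : spars v ≤ T.card := by
  have : {i | v i ≠ 0} ⊆ (T : Set ι) := fun i hi => h i hi
  calc spars v ≤ (T : Set ι).ncard := Set.ncard_le_ncard this (T.finite_toSet)
    _ = T.card := Set.ncard_coe_finset T

theorem kronecker_supported_RIC {M₁ N₁ M₂ N₂ : ℕ}
    (H₁ : Matrix (Fin M₁) (Fin N₁) ℝ) (H₂ : Matrix (Fin M₂) (Fin N₂) ℝ)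
    (s₁ s₂ : ℕ) (δ₁ δ₂ : ℝ) (hδ₁ : δ₁ ∈ Set.Ioo (0:ℝ) 1) (hδ₂ : δ₂ ∈ Set.Ioo (0:ℝ) 1)
    (hRIP₁ : RIPwith H₁ s₁ δ₁) (hRIP₂ : RIPwith H₂ s₂ δ₂) :
    SRIC (H₁ ⊗ₖ H₂)
        {x : Fin N₁ × Fin N₂ → ℝ |
          ∃ (T₁ : Finset (Fin N₁)) (T₂ : Finset (Fin N₂)),
            T₁.card ≤ s₁ ∧ T₂.card ≤ s₂ ∧
            ∀ i j, x (i, j) ≠ 0 → i ∈ T₁ ∧ j ∈ T₂}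
      ≤ (1 + δ₁) * (1 + δ₂) - 1 := by
  obtain ⟨h1p, h1l⟩ := hδ₁
  obtain ⟨h2p, h2l⟩ := hδ₂
  apply csInf_le
  · exact ⟨0, fun y hy => hy.1⟩
  refine ⟨by nlinarith, fun x hx => ?_⟩
  obtain ⟨T₁, T₂, hT₁, hT₂, hsupp⟩ := hx
  set Z : Fin N₁ → Fin M₂ → ℝ := fun j₁ => H₂.mulVec (fun j₂ => x (j₁, j₂)) with hZ
  -- main factorization identity
  have key1 : sqnorm ((H₁ ⊗ₖ H₂).mulVec x)
      = ∑ i₂, sqnorm (H₁.mulVec (fun j₁ => Z j₁ i₂)) := by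
    rw [sqnorm, Fintype.sum_prod_type, Finset.sum_comm]
    refine Finset.sum_congr rfl fun i₂ _ => Finset.sum_congr rfl fun i₁ _ => ?_
    congr 1
    simp only [hZ, Matrix.mulVec, dotProduct, Fintype.sum_prod_type, kroneckerMap_apply,
      Finset.mul_sum]
    exact Finset.sum_congr rfl fun j₁ _ => Finset.sum_congr rfl fun j₂ _ => by ring
  -- columns of Z are s₁-sparse
  have keysp : ∀ i₂ : Fin M₂, spars (fun j₁ => Z j₁ i₂) ≤ s₁ := by
    intro i₂
    refine le_trans (spars_le_of_subset _ T₁ fun j₁ hj₁ => ?_) hT₁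
    by_contra hj
    apply hj₁
    have hx0 : ∀ j₂, x (j₁, j₂) = 0 := fun j₂ => by
      by_contra h0; exact hj (hsupp j₁ j₂ h0).1
    simp [hZ, Matrix.mulVec, dotProduct, hx0]
  -- rows of x are s₂-sparse
  have keyrow : ∀ j₁ : Fin N₁, spars (fun j₂ => x (j₁, j₂)) ≤ s₂ := by
    intro j₁
    refine le_trans (spars_le_of_subset _ T₂ fun j₂ h0 => (hsupp j₁ j₂ h0).2) hT₂
  -- swap of sums for Z
  have key3 : ∑ i₂, sqnorm (fun j₁ => Z j₁ i₂) = ∑ j₁, sqnorm (Z j₁) := by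
    simp only [sqnorm]; exact Finset.sum_comm
  have key4 : sqnorm x = ∑ j₁, sqnorm (fun j₂ => x (j₁, j₂)) := by
    simp only [sqnorm]; rw [Fintype.sum_prod_type]
  -- bounds on ∑ sqnorm (Z j₁)
  have hZup : ∑ j₁, sqnorm (Z j₁) ≤ (1 + δ₂) * sqnorm x := by
    rw [key4, Finset.mul_sum]
    exact Finset.sum_le_sum fun j₁ _ => (hRIP₂ _ (keyrow j₁)).2
  have hZlo : (1 - δ₂) * sqnorm x ≤ ∑ j₁, sqnorm (Z j₁) := by
    rw [key4, Finset.mul_sum]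
    exact Finset.sum_le_sum fun j₁ _ => (hRIP₂ _ (keyrow j₁)).1
  have hZnn : 0 ≤ ∑ j₁, sqnorm (Z j₁) :=
    Finset.sum_nonneg fun _ _ => sqnorm_nonneg' _
  have hxnn : 0 ≤ sqnorm x := sqnorm_nonneg' x
  constructor
  · -- lower bound
    have : (1 - δ₁) * ∑ j₁, sqnorm (Z j₁) ≤ sqnorm ((H₁ ⊗ₖ H₂).mulVec x) := by
      rw [key1, ← key3, Finset.mul_sum]
      exact Finset.sum_le_sum fun i₂ _ => (hRIP₁ _ (keysp i₂)).1
    nlinarith [mul_le_mul_of_nonneg_left hZlo (le_of_lt (by linarith : (0:ℝ) < 1 - δ₁))]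
  · -- upper bound
    have : sqnorm ((H₁ ⊗ₖ H₂).mulVec x) ≤ (1 + δ₁) * ∑ j₁, sqnorm (Z j₁) := by
      rw [key1, ← key3, Finset.mul_sum]
      exact Finset.sum_le_sum fun i₂ _ => (hRIP₁ _ (keysp i₂)).2
    nlinarith [mul_le_mul_of_nonneg_left hZup (le_of_lt (by linarith : (0:ℝ) < 1 + δ₁))]
end
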